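/- arXiv:math-ph/0411068 — 5 statements merged into one kernel-verified Lean document; each statement's English description precedes it below -/
import Mathlib

section
/- For any 0 < s < 1 and any complex numbers u, v, α, β, the inequality 1/|v-β|^s + 1/|u-β|^s ≤ (|v-α|^s/|v-β|^s)(1/|u-α|^s + 1/|u-β|^s) + (|u-α|^s/|u-β|^s)(1/|v-α|^s + 1/|v-β|^s) holds (with the convention that terms with zero denominator are interpreted as +∞). -/
open Complex

lemma rpow_subadd_aux {x y : ℝ} (hx : 0 ≤ x) (hy : 0 ≤ y) {p : ℝ} (hp : 0 ≤ p)
    (hp1 : p ≤ 1) : (x + y) ^ p ≤ x ^ p + y ^ p := by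
  lift x to NNReal using hx
  lift y to NNReal using hy
  exact_mod_cast NNReal.rpow_add_le_add_rpow x y hp hp1

lemma rpow_subadd3_aux {x y z w : ℝ} (hx : 0 ≤ x) (hy : 0 ≤ y) (hz : 0 ≤ z)
    (hle : w ≤ x + y + z) (hw : 0 ≤ w) {p : ℝ} (hp : 0 ≤ p) (hp1 : p ≤ 1) :
    w ^ p ≤ x ^ p + y ^ p + z ^ p := by
  calc w ^ p ≤ (x + y + z) ^ p := Real.rpow_le_rpow hw hle hp
    _ ≤ (x + y) ^ p + z ^ p :=
        rpow_subadd_aux (by linarith) hz hp hp1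
    _ ≤ x ^ p + y ^ p + z ^ p := by
        have := rpow_subadd_aux hx hy hp hp1
        linarith

theorem frac_power_decoupling_ineq (s : ℝ) (hs0 : 0 < s) (hs1 : s < 1)
    (u v α β : ℂ) (huα : u ≠ α) (huβ : u ≠ β) (hvα : v ≠ α) (hvβ : v ≠ β) :
    1 / ‖v - β‖ ^ s + 1 / ‖u - β‖ ^ s ≤
      (‖v - α‖ ^ s / ‖v - β‖ ^ s) *
        (1 / ‖u - α‖ ^ s + 1 / ‖u - β‖ ^ s) +
      (‖u - α‖ ^ s / ‖u - β‖ ^ s) *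
        (1 / ‖v - α‖ ^ s + 1 / ‖v - β‖ ^ s) := by
  set A := ‖u - α‖ with hA
  set B := ‖u - β‖ with hB
  set C := ‖v - α‖ with hC
  set D := ‖v - β‖ with hD
  have hApos : 0 < A := by
    simpa [hA] using (norm_pos_iff.mpr (sub_ne_zero.mpr huα))
  have hBpos : 0 < B := by
    simpa [hB] using (norm_pos_iff.mpr (sub_ne_zero.mpr huβ))
  have hCpos : 0 < C := by
    simpa [hC] using (norm_pos_iff.mpr (sub_ne_zero.mpr hvα))
  have hDpos : 0 < D := by
    simpa [hD] using (norm_pos_iff.mpr (sub_ne_zero.mpr hvβ))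
  -- triangle inequalities
  have htriB : B ≤ A + C + D := by
    have h1 : u - β = (u - α) + ((α - v) + (v - β)) := by ring
    calc B = ‖(u - α) + ((α - v) + (v - β))‖ := by rw [hB, ← h1]
      _ ≤ ‖u - α‖ + ‖(α - v) + (v - β)‖ :=
          norm_add_le _ _
      _ ≤ ‖u - α‖ + (‖α - v‖ + ‖v - β‖) := by
          have := norm_add_le (α - v) (v - β)
          linarith
      _ = A + C + D := by
          rw [hA, hC, hD, ← norm_sub_rev v α]; ring_nf
  have htriD : D ≤ A + B + C := by
    have h1 : v - β = (v - α) + ((α - u) + (u - β)) := by ring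
    calc D = ‖(v - α) + ((α - u) + (u - β))‖ := by rw [hD, ← h1]
      _ ≤ ‖v - α‖ + ‖(α - u) + (u - β)‖ :=
          norm_add_le _ _
      _ ≤ ‖v - α‖ + (‖α - u‖ + ‖u - β‖) := by
          have := norm_add_le (α - u) (u - β)
          linarith
      _ = A + B + C := by
          rw [hA, hB, hC, ← norm_sub_rev u α]; ring_nf
  set a := A ^ s with ha
  set b := B ^ s with hb
  set c := C ^ s with hc
  set d := D ^ s with hd
  have hapos : 0 < a := Real.rpow_pos_of_pos hApos s
  have hbpos : 0 < b := Real.rpow_pos_of_pos hBpos s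
  have hcpos : 0 < c := Real.rpow_pos_of_pos hCpos s
  have hdpos : 0 < d := Real.rpow_pos_of_pos hDpos s
  have hbsub : b ≤ a + c + d :=
    rpow_subadd3_aux hApos.le hCpos.le hDpos.le htriB hBpos.le hs0.le hs1.le
  have hdsub : d ≤ a + b + c :=
    rpow_subadd3_aux hApos.le hBpos.le hCpos.le htriD hDpos.le hs0.le hs1.le
  -- reduce to the polynomial inequality
  rw [div_add_div _ _ (ne_of_gt hdpos) (ne_of_gt hbpos)]
  have key : a * c * (b + d - a - c) ≤ b * c ^ 2 + a ^ 2 * d := by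
    set t := b + d - a - c with htdef
    rcases le_or_gt t 0 with ht | ht
    · nlinarith [mul_pos hapos hcpos, mul_pos hbpos (mul_pos hcpos hcpos),
        mul_pos (mul_pos hapos hapos) hdpos]
    · have h2b : t ≤ 2 * b := by linarith
      have h2d : t ≤ 2 * d := by linarith
      have hsq : t * t ≤ (2 * b) * (2 * d) :=
        mul_le_mul h2b h2d ht.le (by linarith)
      have hsq2 : (a * c * t) ^ 2 ≤ (b * c ^ 2 + a ^ 2 * d) ^ 2 := by
        nlinarith [mul_le_mul_of_nonneg_left hsq
          (by positivity : (0:ℝ) ≤ a ^ 2 * c ^ 2), sq_nonneg (b * c ^ 2 - a ^ 2 * d)]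
      exact (pow_le_pow_iff_left₀ (by positivity) (by positivity) two_ne_zero).mp hsq2
  rw [div_le_iff₀ (by positivity)]
  have hexp : (c / d) * (1 / a + 1 / b) + (a / b) * (1 / c + 1 / d)
      = (b * c ^ 2 + a ^ 2 * d + a * c * (a + c)) / (a * b * c * d) := by
    field_simp
    ring
  rw [hexp, div_mul_eq_mul_div, le_div_iff₀ (by positivity)]
  nlinarith [mul_le_mul_of_nonneg_right key (mul_pos hbpos hdpos).le]
end

section
/- Let 0 < s < 1 and let ν be a probability measure on [0,2π) with bounded density τ. Then there exists a constant C' = C'(s, ν) > 0 such that for all complex numbers α, β: ∫ |e^{iθ} - α|^s / |e^{iθ} - β|^s dν(θ) ≥ C' ∫ 1/|e^{iθ} - β|^s dν(θ). -/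
open MeasureTheory Real Complex
open scoped ENNReal

lemma aux_unit_half (u w : ℂ) (hu : ‖u‖ = 1) (hw : ‖w‖ = 1)
    (r : ℝ) (hr : 0 ≤ r) : ‖u - w‖ ≤ 2 * ‖u - (r:ℂ) * w‖ := by
  have h1 : ‖u - w‖ ^ 2 = 2 - 2 * (u * (starRingEnd ℂ) w).re := by
    rw [Complex.sq_norm, Complex.normSq_sub, Complex.normSq_eq_norm_sq, Complex.normSq_eq_norm_sq,
      hu, hw]; ring
  have h2 : ‖u - (r:ℂ) * w‖ ^ 2 = 1 + r ^ 2 - 2 * r * (u * (starRingEnd ℂ) w).re := by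
    rw [Complex.sq_norm, Complex.normSq_sub, Complex.normSq_eq_norm_sq, Complex.normSq_eq_norm_sq, hu]
    have : ‖(r:ℂ) * w‖ = r := by
      rw [norm_mul, hw, mul_one, Complex.norm_real, Real.norm_of_nonneg hr]
    rw [this]
    have : (u * (starRingEnd ℂ) ((r:ℂ) * w)).re = r * (u * (starRingEnd ℂ) w).re := by
      rw [map_mul, Complex.conj_ofReal]; ring_nf
      simp [Complex.mul_re, Complex.ofReal_re, Complex.ofReal_im]; ring
    rw [this]; ring
  set c : ℝ := (u * (starRingEnd ℂ) w).re with hc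
  have hcle : |c| ≤ 1 := by
    calc |c| ≤ ‖u * (starRingEnd ℂ) w‖ := Complex.abs_re_le_norm _
    _ = 1 := by rw [norm_mul, Complex.norm_conj, hu, hw, mul_one]
  have hc1 : c ≤ 1 := (abs_le.1 hcle).2
  have hc2 : -1 ≤ c := (abs_le.1 hcle).1
  have hA : 0 ≤ ‖u - w‖ := norm_nonneg _
  have hB : 0 ≤ ‖u - (r:ℂ) * w‖ := norm_nonneg _
  nlinarith [sq_nonneg (‖u - w‖ - 2 * ‖u - (r:ℂ) * w‖),
    mul_nonneg (by linarith : (0:ℝ) ≤ 1 + c) (sq_nonneg (r - 1)),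
    mul_nonneg (by linarith : (0:ℝ) ≤ 1 - c) (mul_nonneg hr (by linarith : (0:ℝ) ≤ r + 2))]

lemma aux_abs_exp_sub (x y : ℝ) :
    ‖Complex.exp (x*Complex.I) - Complex.exp (y*Complex.I)‖
      = 2 * |Real.sin ((x-y)/2)| := by
  have h1 : ‖Complex.exp (x*Complex.I) - Complex.exp (y*Complex.I)‖ ^ 2
      = 2 - 2 * Real.cos (x - y) := by
    rw [Complex.sq_norm, Complex.normSq_sub, Complex.normSq_eq_norm_sq, Complex.normSq_eq_norm_sq,
      Complex.norm_exp_ofReal_mul_I, Complex.norm_exp_ofReal_mul_I]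
    have : (Complex.exp (x*Complex.I) * (starRingEnd ℂ) (Complex.exp (y*Complex.I))).re
        = Real.cos (x - y) := by
      rw [← Complex.exp_conj]
      have : (starRingEnd ℂ) ((y:ℂ) * Complex.I) = -((y:ℂ) * Complex.I) := by
        simp [Complex.conj_I]
      rw [this, ← Complex.exp_add]
      have : (x:ℂ) * Complex.I + -((y:ℂ) * Complex.I) = ((x - y : ℝ) : ℂ) * Complex.I := by
        push_cast; ring
      rw [this, Complex.exp_ofReal_mul_I_re]
    rw [this]; ring
  have h2 : (2 * |Real.sin ((x-y)/2)|) ^ 2 = 2 - 2 * Real.cos (x - y) := by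
    rw [mul_pow, _root_.sq_abs, Real.sin_sq_eq_half_sub]
    rw [show 2 * ((x - y)/2) = x - y by ring]; ring
  have hA : 0 ≤ ‖Complex.exp (x*Complex.I) - Complex.exp (y*Complex.I)‖ :=
    norm_nonneg _
  have hB : 0 ≤ 2 * |Real.sin ((x-y)/2)| := by positivity
  nlinarith [h1, h2]

lemma aux_sin_lower (x : ℝ) (hx : |x| ≤ π) : |x| / π ≤ |Real.sin (x/2)| := by
  have hd : |x/2| ≤ π / 2 := by
    rw [abs_div, abs_of_pos (by norm_num : (0:ℝ) < 2)]
    linarith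
  have h := Real.mul_abs_le_abs_sin hd
  have : 2 / π * |x/2| = |x| / π := by
    rw [abs_div, abs_of_pos (by norm_num : (0:ℝ) < 2)]
    field_simp
  linarith

lemma aux_pointwise (s : ℝ) (hs0 : 0 < s) (θ : ℝ) (hθ : θ ∈ Set.Ico (0:ℝ) (2*π))
    (γ : ℂ) (hγ : γ ≠ 0) (h1 : θ ≠ Complex.arg γ) (h2 : θ ≠ Complex.arg γ + 2*π) :
    1 / ‖Complex.exp (θ*Complex.I) - γ‖ ^ s
      ≤ π^s * |θ - Complex.arg γ|^(-s) + π^s * |θ - (Complex.arg γ + 2*π)|^(-s) := by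
  obtain ⟨hθ0, hθ2⟩ := hθ
  have harg1 : Complex.arg γ ≤ π := Complex.arg_le_pi γ
  have harg2 : -π < Complex.arg γ := Complex.neg_pi_lt_arg γ
  set c := Complex.arg γ with hc
  -- distance lower bound via sin
  have hdist : |Real.sin ((θ - c)/2)| ≤ ‖Complex.exp (θ*Complex.I) - γ‖ := by
    have hγeq : ((‖γ‖ : ℝ) : ℂ) * Complex.exp (c * Complex.I) = γ :=
      Complex.norm_mul_exp_arg_mul_I γ
    have := aux_unit_half (Complex.exp (θ*Complex.I)) (Complex.exp (c*Complex.I))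
      (Complex.norm_exp_ofReal_mul_I θ) (Complex.norm_exp_ofReal_mul_I c)
      (‖γ‖) (norm_nonneg γ)
    rw [hγeq, aux_abs_exp_sub] at this
    linarith
  -- choose representative x'
  obtain ⟨x', hx'abs, hx'ne, hx'sin, hx'eq⟩ :
      ∃ x' : ℝ, |x'| ≤ π ∧ x' ≠ 0 ∧ |Real.sin (x'/2)| = |Real.sin ((θ - c)/2)| ∧
        (|x'| = |θ - c| ∨ |x'| = |θ - (c + 2*π)|) := by
    by_cases hcase : θ - c ≤ π
    · exact ⟨θ - c, by rw [abs_le]; constructor <;> linarith, sub_ne_zero.2 h1, rfl,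
        Or.inl rfl⟩
    · refine ⟨θ - (c + 2*π), by rw [abs_le]; constructor <;> linarith,
        sub_ne_zero.2 h2, ?_, Or.inr rfl⟩
      have : (θ - (c + 2*π))/2 = (θ - c)/2 - π := by ring
      rw [this, Real.sin_sub_pi, abs_neg]
  have hx'pos : 0 < |x'| := abs_pos.2 hx'ne
  have hlow : |x'| / π ≤ ‖Complex.exp (θ*Complex.I) - γ‖ := by
    calc |x'| / π ≤ |Real.sin (x'/2)| := aux_sin_lower x' hx'abs
    _ = |Real.sin ((θ - c)/2)| := hx'sin
    _ ≤ _ := hdist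
  have hxpos : 0 < |x'| / π := div_pos hx'pos Real.pi_pos
  have hmain : 1 / ‖Complex.exp (θ*Complex.I) - γ‖ ^ s ≤ π^s * |x'|^(-s) := by
    have h1' : (|x'|/π) ^ s ≤ ‖Complex.exp (θ*Complex.I) - γ‖ ^ s :=
      Real.rpow_le_rpow hxpos.le hlow hs0.le
    have h2' : 0 < (|x'|/π) ^ s := Real.rpow_pos_of_pos hxpos s
    have h3' : 1 / ‖Complex.exp (θ*Complex.I) - γ‖ ^ s ≤ 1 / (|x'|/π)^s := by
      apply one_div_le_one_div_of_le h2' h1'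
    refine h3'.trans (le_of_eq ?_)
    rw [Real.div_rpow (abs_nonneg x') Real.pi_pos.le, one_div_div,
      Real.rpow_neg (abs_nonneg x')]
    ring
  rcases hx'eq with h | h
  · rw [h] at hmain
    have : 0 ≤ π^s * |θ - (c + 2*π)|^(-s) :=
      mul_nonneg (Real.rpow_nonneg Real.pi_pos.le s) (Real.rpow_nonneg (abs_nonneg _) _)
    linarith
  · rw [h] at hmain
    have : 0 ≤ π^s * |θ - c|^(-s) :=
      mul_nonneg (Real.rpow_nonneg Real.pi_pos.le s) (Real.rpow_nonneg (abs_nonneg _) _)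
    linarith

lemma aux_meas (s c : ℝ) (hs : 0 ≤ s) : Measurable fun x : ℝ => |x - c| ^ (-s) := by
  have h : (fun x : ℝ => |x - c| ^ (-s)) = fun x : ℝ => (|x - c| ^ s)⁻¹ := by
    funext x; rw [Real.rpow_neg (abs_nonneg _)]
  rw [h]
  exact ((Real.continuous_rpow_const hs).comp
    ((continuous_id.sub continuous_const).abs)).measurable.inv

lemma aux_uniform (s : ℝ) (hs0 : 0 < s) (hs1 : s < 1) :
    ∃ B : ℝ≥0∞, B ≠ ⊤ ∧ ∀ γ : ℂ,
      (∫⁻ θ in Set.Ico (0:ℝ) (2*π),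
        ENNReal.ofReal (1 / ‖Complex.exp (↑θ * Complex.I) - γ‖ ^ s) ∂volume) ≤ B := by
  have hπ : (0:ℝ) < π := Real.pi_pos
  set L : ℝ := 6 * π with hL
  set B' : ℝ≥0∞ := ∫⁻ u in Set.Icc (-L) L, ENNReal.ofReal (|u| ^ (-s)) ∂volume with hB'def
  -- positive half is finite
  have hpos : (∫⁻ u in Set.Icc (0:ℝ) L, ENNReal.ofReal (|u| ^ (-s)) ∂volume) < ⊤ := by
    have h1 : (∫⁻ u in Set.Icc (0:ℝ) L, ENNReal.ofReal (|u| ^ (-s)) ∂volume)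
        = ∫⁻ u in Set.Ioc (0:ℝ) L, ENNReal.ofReal (|u| ^ (-s)) ∂volume := by
      rw [← Measure.restrict_congr_set Ioc_ae_eq_Icc]
    have h2 : (∫⁻ u in Set.Ioc (0:ℝ) L, ENNReal.ofReal (|u| ^ (-s)) ∂volume)
        = ∫⁻ u in Set.Ioc (0:ℝ) L, ENNReal.ofReal (u ^ (-s)) ∂volume := by
      refine setLIntegral_congr_fun measurableSet_Ioc (fun u hu => ?_)
      rw [abs_of_pos hu.1]
    rw [h1, h2]
    have hint : IntervalIntegrable (fun u : ℝ => u ^ (-s)) volume 0 L :=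
      intervalIntegral.intervalIntegrable_rpow' (by linarith)
    rw [intervalIntegrable_iff, Set.uIoc_of_le (by positivity : (0:ℝ) ≤ L)] at hint
    exact hint.setLIntegral_lt_top
  -- negative half equals positive half
  have hneg : (∫⁻ u in Set.Icc (-L) (0:ℝ), ENNReal.ofReal (|u| ^ (-s)) ∂volume)
      = ∫⁻ u in Set.Icc (0:ℝ) L, ENNReal.ofReal (|u| ^ (-s)) ∂volume := by
    have hpre : (fun x : ℝ => -x) ⁻¹' Set.Icc (0:ℝ) L = Set.Icc (-L) 0 := by
      ext x; simp only [Set.mem_preimage, Set.mem_Icc]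
      constructor <;> intro h <;> exact ⟨by linarith [h.1, h.2], by linarith [h.1, h.2]⟩
    have := (Measure.measurePreserving_neg (volume : Measure ℝ)).setLIntegral_comp_preimage_emb
      (MeasurableEquiv.neg ℝ).measurableEmbedding
      (fun u => ENNReal.ofReal (|u| ^ (-s))) (Set.Icc (0:ℝ) L)
    rw [← this]
    have : ∀ x : ℝ, ENNReal.ofReal (|(-x)| ^ (-s)) = ENNReal.ofReal (|x| ^ (-s)) := by
      intro x; rw [abs_neg]
    calc ∫⁻ u in Set.Icc (-L) (0:ℝ), ENNReal.ofReal (|u| ^ (-s)) ∂volume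
        = ∫⁻ u in (fun x : ℝ => -x) ⁻¹' Set.Icc (0:ℝ) L,
            ENNReal.ofReal (|(-u)| ^ (-s)) ∂volume := by
          rw [hpre]; exact setLIntegral_congr_fun measurableSet_Icc
            (fun u _ => by rw [abs_neg])
      _ = _ := by rfl
  have hB' : B' ≠ ⊤ := by
    have hsub : Set.Icc (-L) L ⊆ Set.Icc (-L) 0 ∪ Set.Icc 0 L := by
      intro x hx; rcases le_or_gt x 0 with h | h
      · exact Or.inl ⟨hx.1, h⟩
      · exact Or.inr ⟨h.le, hx.2⟩
    have this1 : B' ≤ (∫⁻ u in Set.Icc (-L) (0:ℝ), ENNReal.ofReal (|u| ^ (-s)) ∂volume)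
        + ∫⁻ u in Set.Icc (0:ℝ) L, ENNReal.ofReal (|u| ^ (-s)) ∂volume :=
      (lintegral_mono_set hsub).trans (lintegral_union_le _ _ _)
    rw [hneg] at this1
    exact (this1.trans_lt (by exact ENNReal.add_lt_top.2 ⟨hpos, hpos⟩)).ne
  -- translation bound
  have htrans : ∀ c : ℝ, |c| ≤ 4*π →
      (∫⁻ θ in Set.Ico (0:ℝ) (2*π), ENNReal.ofReal (|θ - c| ^ (-s)) ∂volume) ≤ B' := by
    intro c hc
    have h1 : Set.Ico (0:ℝ) (2*π) ⊆ Set.Icc (c - L) (c + L) := by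
      intro x hx
      have := abs_le.1 hc
      exact ⟨by simp only [Set.mem_Ico] at hx; linarith [this.2, hx.1],
        by simp only [Set.mem_Ico] at hx; linarith [this.1, hx.2]⟩
    refine (lintegral_mono_set h1).trans (le_of_eq ?_)
    have hpre : (fun x : ℝ => x + c) ⁻¹' Set.Icc (c - L) (c + L) = Set.Icc (-L) L := by
      rw [Set.preimage_add_const_Icc]; congr 1 <;> ring
    have := (measurePreserving_add_right (volume : Measure ℝ) c).setLIntegral_comp_preimage_emb
      (measurableEmbedding_addRight c)
      (fun y => ENNReal.ofReal (|y - c| ^ (-s))) (Set.Icc (c - L) (c + L))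
    rw [hpre] at this
    rw [← this]
    refine setLIntegral_congr_fun measurableSet_Icc (fun u _ => ?_)
    simp [add_sub_cancel_right]
  refine ⟨ENNReal.ofReal (2*π) + (ENNReal.ofReal (π^s) * B' + ENNReal.ofReal (π^s) * B'),
    by simp [ENNReal.add_ne_top, ENNReal.mul_ne_top, hB'], fun γ => ?_⟩
  by_cases hγ : γ = 0
  · subst hγ
    have : ∀ θ : ℝ, ENNReal.ofReal (1 / ‖Complex.exp (↑θ * Complex.I) - 0‖ ^ s)
        = 1 := by
      intro θ
      rw [sub_zero, Complex.norm_exp_ofReal_mul_I, Real.one_rpow, div_one, ENNReal.ofReal_one]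
    simp only [this]
    rw [lintegral_const, Measure.restrict_apply_univ, Real.volume_Ico, one_mul]
    refine le_trans (le_of_eq (by norm_num)) (le_add_right (le_refl _))
  · -- a.e. bound
    set c₁ := Complex.arg γ with hc₁
    have harg1 : c₁ ≤ π := Complex.arg_le_pi γ
    have harg2 : -π < c₁ := Complex.neg_pi_lt_arg γ
    have hae : ∀ᵐ (θ : ℝ) ∂(volume.restrict (Set.Ico (0:ℝ) (2*π))),
        ENNReal.ofReal (1 / ‖Complex.exp (↑θ * Complex.I) - γ‖ ^ s)
          ≤ ENNReal.ofReal (π^s * |θ - c₁| ^ (-s)) + ENNReal.ofReal (π^s * |θ - (c₁ + 2*π)| ^ (-s)) := by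
      have hnull : (volume.restrict (Set.Ico (0:ℝ) (2*π))) ({c₁, c₁ + 2*π} : Set ℝ) = 0 := by
        rw [Measure.restrict_apply' measurableSet_Ico]
        exact measure_mono_null Set.inter_subset_left (Set.Finite.measure_zero (Set.toFinite _) _)
      have h1 : ∀ᵐ (θ : ℝ) ∂(volume.restrict (Set.Ico (0:ℝ) (2*π))), θ ∉ ({c₁, c₁ + 2*π} : Set ℝ) :=
        measure_eq_zero_iff_ae_notMem.mp hnull
      have h2 : ∀ᵐ (θ : ℝ) ∂(volume.restrict (Set.Ico (0:ℝ) (2*π))), θ ∈ Set.Ico (0:ℝ) (2*π) :=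
        ae_restrict_mem measurableSet_Ico
      filter_upwards [h1, h2] with θ hθn hθm
      have hne1 : θ ≠ c₁ := fun h => hθn (by simp [h])
      have hne2 : θ ≠ c₁ + 2*π := fun h => hθn (by simp [h])
      have := aux_pointwise s hs0 θ hθm γ hγ hne1 hne2
      calc ENNReal.ofReal (1 / ‖Complex.exp (↑θ * Complex.I) - γ‖ ^ s)
          ≤ ENNReal.ofReal (π^s * |θ - c₁| ^ (-s) + π^s * |θ - (c₁ + 2*π)| ^ (-s)) :=
            ENNReal.ofReal_le_ofReal this
        _ ≤ _ := ENNReal.ofReal_add_le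
    refine le_trans (lintegral_mono_ae hae) ?_
    have hmeas : ∀ c : ℝ, Measurable fun θ : ℝ => ENNReal.ofReal (π^s * |θ - c| ^ (-s)) := by
      intro c
      apply Measurable.ennreal_ofReal
      exact measurable_const.mul (aux_meas s c hs0.le)
    rw [lintegral_add_left (hmeas c₁)]
    have hb1 : (∫⁻ θ in Set.Ico (0:ℝ) (2*π), ENNReal.ofReal (π^s * |θ - c₁| ^ (-s)) ∂volume)
        ≤ ENNReal.ofReal (π^s) * B' := by
      have : ∀ θ : ℝ, ENNReal.ofReal (π^s * |θ - c₁| ^ (-s))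
          = ENNReal.ofReal (π^s) * ENNReal.ofReal (|θ - c₁| ^ (-s)) := fun θ =>
        ENNReal.ofReal_mul (Real.rpow_nonneg hπ.le s)
      simp only [this]
      rw [lintegral_const_mul _ ((aux_meas s c₁ hs0.le).ennreal_ofReal)]
      exact mul_le_mul_right (htrans c₁ (by rw [abs_le]; constructor <;> linarith)) _
    have hb2 : (∫⁻ θ in Set.Ico (0:ℝ) (2*π), ENNReal.ofReal (π^s * |θ - (c₁ + 2*π)| ^ (-s)) ∂volume)
        ≤ ENNReal.ofReal (π^s) * B' := by
      have : ∀ θ : ℝ, ENNReal.ofReal (π^s * |θ - (c₁ + 2*π)| ^ (-s))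
          = ENNReal.ofReal (π^s) * ENNReal.ofReal (|θ - (c₁ + 2*π)| ^ (-s)) := fun θ =>
        ENNReal.ofReal_mul (Real.rpow_nonneg hπ.le s)
      simp only [this]
      rw [lintegral_const_mul _ ((aux_meas s (c₁ + 2*π) hs0.le).ennreal_ofReal)]
      exact mul_le_mul_right (htrans _ (by rw [abs_le]; constructor <;> linarith)) _
    calc _ ≤ ENNReal.ofReal (π^s) * B' + ENNReal.ofReal (π^s) * B' := add_le_add hb1 hb2
      _ ≤ _ := le_add_self

lemma aux_cont_abs (γ : ℂ) : Continuous fun θ : ℝ => ‖Complex.exp (↑θ * Complex.I) - γ‖ :=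
  continuous_norm.comp ((Complex.continuous_exp.comp
    (Complex.continuous_ofReal.mul continuous_const)).sub continuous_const)

lemma aux_meas2 (s : ℝ) (hs : 0 ≤ s) (γ : ℂ) :
    Measurable fun θ : ℝ =>
      ENNReal.ofReal (1 / ‖Complex.exp (↑θ * Complex.I) - γ‖ ^ s) := by
  have hcont : Continuous fun θ : ℝ => ‖Complex.exp (↑θ * Complex.I) - γ‖ ^ s :=
    (Real.continuous_rpow_const hs).comp (aux_cont_abs γ)
  simp only [one_div]
  exact hcont.measurable.inv.ennreal_ofReal

lemma aux_meas3 (s : ℝ) (hs : 0 ≤ s) (α β : ℂ) :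
    Measurable fun θ : ℝ =>
      ENNReal.ofReal (‖Complex.exp (↑θ * Complex.I) - α‖ ^ s /
        ‖Complex.exp (↑θ * Complex.I) - β‖ ^ s) := by
  have h1 : Continuous fun θ : ℝ => ‖Complex.exp (↑θ * Complex.I) - α‖ ^ s :=
    (Real.continuous_rpow_const hs).comp (aux_cont_abs α)
  have h2 : Continuous fun θ : ℝ => ‖Complex.exp (↑θ * Complex.I) - β‖ ^ s :=
    (Real.continuous_rpow_const hs).comp (aux_cont_abs β)
  simp only [div_eq_mul_inv]
  exact (h1.measurable.mul h2.measurable.inv).ennreal_ofReal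

/-- Unitary decoupling lemma (lower bound part): for a probability measure on
`[0,2π)` with bounded density, there is `C' > 0` such that for all `α β : ℂ`,
`∫ |e^{iθ}-α|^s / |e^{iθ}-β|^s dν ≥ C' ∫ 1/|e^{iθ}-β|^s dν`. -/
theorem unitary_decoupling_lemma (s : ℝ) (hs0 : 0 < s) (hs1 : s < 1)
    (τ : ℝ → ℝ≥0∞) (M : ℝ≥0∞) (hM : M < ⊤) (hτ : ∀ θ, τ θ ≤ M)
    (ν : Measure ℝ)
    (hν : ν = (volume.restrict (Set.Ico (0:ℝ) (2 * π))).withDensity τ)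
    (hprob : IsProbabilityMeasure ν) :
    ∃ C' : ℝ, 0 < C' ∧ ∀ α β : ℂ,
      ENNReal.ofReal C' *
        (∫⁻ θ, ENNReal.ofReal (1 / ‖Complex.exp (θ * Complex.I) - β‖ ^ s) ∂ν)
      ≤ ∫⁻ θ, ENNReal.ofReal
          (‖Complex.exp (θ * Complex.I) - α‖ ^ s /
            ‖Complex.exp (θ * Complex.I) - β‖ ^ s) ∂ν := by
  obtain ⟨B, hBtop, hB⟩ := aux_uniform s hs0 hs1
  set μ₀ := volume.restrict (Set.Ico (0:ℝ) (2 * π)) with hμ₀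
  have hle : ν ≤ M • μ₀ := by
    rw [hν]
    refine Measure.le_iff.mpr fun t ht => ?_
    rw [withDensity_apply _ ht, Measure.smul_apply, smul_eq_mul]
    calc (∫⁻ θ in t, τ θ ∂μ₀) ≤ ∫⁻ _ in t, M ∂μ₀ := lintegral_mono fun θ => hτ θ
    _ = M * μ₀ t := by rw [setLIntegral_const]
  -- uniform bound for ν-integrals
  have hK : ∀ γ : ℂ,
      (∫⁻ θ, ENNReal.ofReal (1 / ‖Complex.exp (↑θ * Complex.I) - γ‖ ^ s) ∂ν)
        ≤ M * B := by
    intro γ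
    calc (∫⁻ θ, ENNReal.ofReal (1 / ‖Complex.exp (↑θ * Complex.I) - γ‖ ^ s) ∂ν)
        ≤ ∫⁻ θ, ENNReal.ofReal (1 / ‖Complex.exp (↑θ * Complex.I) - γ‖ ^ s)
            ∂(M • μ₀) := lintegral_mono' hle (le_refl _)
      _ = M * ∫⁻ θ, ENNReal.ofReal (1 / ‖Complex.exp (↑θ * Complex.I) - γ‖ ^ s)
            ∂μ₀ := lintegral_smul_measure _ _
      _ ≤ M * B := mul_le_mul_right (hB γ) M
  have hMB : M * B ≠ ⊤ := ENNReal.mul_ne_top hM.ne hBtop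
  set C : ℝ := max (M * B).toReal 1 with hCdef
  have hC1 : (1:ℝ) ≤ C := le_max_right _ _
  have hCpos : (0:ℝ) < C := by linarith
  have hKC : ∀ γ : ℂ,
      (∫⁻ θ, ENNReal.ofReal (1 / ‖Complex.exp (↑θ * Complex.I) - γ‖ ^ s) ∂ν)
        ≤ ENNReal.ofReal C := by
    intro γ
    refine (hK γ).trans ?_
    rw [← ENNReal.ofReal_toReal hMB]
    exact ENNReal.ofReal_le_ofReal (le_max_left _ _)
  -- the radius r
  set r : ℝ := (2*C) ^ (-(s⁻¹)) with hrdef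
  have h2C : (0:ℝ) < 2*C := by linarith
  have hrpos : 0 < r := Real.rpow_pos_of_pos h2C _
  have hrs : r ^ s = (2*C)⁻¹ := by
    rw [hrdef, ← Real.rpow_mul h2C.le, neg_mul, inv_mul_cancel₀ hs0.ne', Real.rpow_neg_one]
  -- null sets
  have hnull : ∀ γ : ℂ, ν {θ : ℝ | Complex.exp (↑θ * Complex.I) = γ} = 0 := by
    intro γ
    set S := {θ : ℝ | Complex.exp (↑θ * Complex.I) = γ} with hSdef
    have hSm : MeasurableSet S :=
      (isClosed_eq ((Complex.continuous_exp.comp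
        (Complex.continuous_ofReal.mul continuous_const))) continuous_const).measurableSet
    have hvolS : (volume : Measure ℝ) S = 0 := by
      by_cases hS : S = ∅
      · simp [hS]
      obtain ⟨θ₁, hθ₁⟩ := Set.nonempty_iff_ne_empty.mpr hS
      have hsub : S ⊆ Set.range (fun n : ℤ => θ₁ + n * (2*π)) := by
        intro θ hθ
        have hθγ : Complex.exp (↑θ * Complex.I) = γ := hθ
        have hθ₁γ : Complex.exp (↑θ₁ * Complex.I) = γ := hθ₁
        have hone : Complex.exp (((θ - θ₁ : ℝ) : ℂ) * Complex.I) = 1 := by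
          have : ((θ - θ₁ : ℝ) : ℂ) * Complex.I = ↑θ * Complex.I - ↑θ₁ * Complex.I := by
            push_cast; ring
          have hγ0 : γ ≠ 0 := hθ₁γ ▸ Complex.exp_ne_zero _
          rw [this, Complex.exp_sub, hθγ, hθ₁γ, div_self hγ0]
        rw [Complex.exp_eq_one_iff] at hone
        obtain ⟨n, hn⟩ := hone
        refine ⟨n, ?_⟩
        have hI : (Complex.I : ℂ) ≠ 0 := Complex.I_ne_zero
        have hn' : ((θ - θ₁ : ℝ) : ℂ) = (n : ℂ) * (2 * ↑π) := by
          have h2 : ((θ - θ₁ : ℝ) : ℂ) * Complex.I = ((n : ℂ) * (2 * ↑π)) * Complex.I := by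
            rw [hn]; ring
          exact mul_right_cancel₀ hI h2
        have : θ - θ₁ = (n : ℝ) * (2 * π) := by exact_mod_cast hn'
        simp only []
        linarith [this]
      exact measure_mono_null hsub ((Set.countable_range _).measure_zero _)
    have hμ₀S : μ₀ S ≤ 0 := by
      rw [← hvolS]
      exact Measure.restrict_le_self S
    have : ν S ≤ (M • μ₀) S := Measure.le_iff'.mp hle S
    rw [Measure.smul_apply, smul_eq_mul] at this
    exact le_antisymm (this.trans (by rw [le_antisymm hμ₀S zero_le, mul_zero])) zero_le
  -- lower bound on the measure of the good set
  have hA : ∀ α : ℂ,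
      (1:ℝ≥0∞)/2 ≤ ν {θ : ℝ | r ≤ ‖Complex.exp (↑θ * Complex.I) - α‖} := by
    intro α
    set A := {θ : ℝ | r ≤ ‖Complex.exp (↑θ * Complex.I) - α‖} with hAdef
    have hAm : MeasurableSet A :=
      (isClosed_le continuous_const (aux_cont_abs α)).measurableSet
    have hmark : ν {θ : ℝ | ENNReal.ofReal (2*C) ≤
        ENNReal.ofReal (1 / ‖Complex.exp (↑θ * Complex.I) - α‖ ^ s)} ≤ 1/2 := by
      have hm := mul_meas_ge_le_lintegral₀ ((aux_meas2 s hs0.le α).aemeasurable (μ := ν))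
        (ENNReal.ofReal (2*C))
      have hne0 : (2 : ℝ≥0∞) * ENNReal.ofReal C ≠ 0 := by
        simp [ENNReal.ofReal_pos.mpr hCpos, (ENNReal.ofReal_pos.mpr hCpos).ne']
      have hnetop : (2 : ℝ≥0∞) * ENNReal.ofReal C ≠ ⊤ := by
        simp [ENNReal.mul_ne_top, ENNReal.ofReal_ne_top]
      have h2a : ENNReal.ofReal (2*C) = 2 * ENNReal.ofReal C := by
        rw [ENNReal.ofReal_mul (by norm_num : (0:ℝ) ≤ 2)]; norm_num
      have hle2 : 2 * ENNReal.ofReal C * ν {θ : ℝ | ENNReal.ofReal (2*C) ≤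
          ENNReal.ofReal (1 / ‖Complex.exp (↑θ * Complex.I) - α‖ ^ s)}
            ≤ ENNReal.ofReal C := by
        rw [← h2a]; exact hm.trans (hKC α)
      have heq : ENNReal.ofReal C / (2 * ENNReal.ofReal C) = 1/2 := by
        calc ENNReal.ofReal C / (2 * ENNReal.ofReal C)
            = ENNReal.ofReal C * 1 / (ENNReal.ofReal C * 2) := by
              rw [mul_one, mul_comm]
          _ = 1 / 2 := ENNReal.mul_div_mul_left 1 2
              (ENNReal.ofReal_pos.mpr hCpos).ne' ENNReal.ofReal_ne_top
      rw [← heq, ENNReal.le_div_iff_mul_le (Or.inl hne0) (Or.inl hnetop), mul_comm]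
      exact hle2
    have hcompl : ν Aᶜ ≤ 1/2 := by
      have hsub : Aᶜ ⊆ {θ : ℝ | Complex.exp (↑θ * Complex.I) = α} ∪
          {θ : ℝ | ENNReal.ofReal (2*C) ≤
            ENNReal.ofReal (1 / ‖Complex.exp (↑θ * Complex.I) - α‖ ^ s)} := by
        intro θ hθ
        simp only [hAdef, Set.mem_compl_iff, Set.mem_setOf_eq, not_le] at hθ
        by_cases h0 : ‖Complex.exp (↑θ * Complex.I) - α‖ = 0
        · left
          exact sub_eq_zero.mp (norm_eq_zero.mp h0)
        · right
          have hpos : 0 < ‖Complex.exp (↑θ * Complex.I) - α‖ :=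
            lt_of_le_of_ne (norm_nonneg _) (Ne.symm h0)
          have h1 : ‖Complex.exp (↑θ * Complex.I) - α‖ ^ s ≤ r ^ s :=
            Real.rpow_le_rpow hpos.le hθ.le hs0.le
          have h2 : 0 < ‖Complex.exp (↑θ * Complex.I) - α‖ ^ s :=
            Real.rpow_pos_of_pos hpos s
          have h3 : 1 / r ^ s ≤ 1 / ‖Complex.exp (↑θ * Complex.I) - α‖ ^ s :=
            one_div_le_one_div_of_le h2 h1
          rw [hrs, one_div, inv_inv] at h3
          exact Set.mem_setOf_eq ▸ ENNReal.ofReal_le_ofReal h3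
      refine (measure_mono hsub).trans ((measure_union_le _ _).trans ?_)
      rw [hnull α, zero_add]
      exact hmark
    have h1 : ν A + ν Aᶜ = 1 := by
      rw [measure_add_measure_compl hAm, measure_univ]
    have h2 : (1:ℝ≥0∞) ≤ ν A + 1/2 :=
      h1.symm.trans_le (add_le_add_right hcompl _)
    calc (1:ℝ≥0∞)/2 = 1 - 1/2 := (ENNReal.sub_half ENNReal.one_ne_top).symm
    _ ≤ ν A := tsub_le_iff_right.mpr h2
  -- pointwise norm bounds
  have habs_le : ∀ (θ : ℝ) (γ : ℂ),
      ‖Complex.exp (↑θ * Complex.I) - γ‖ ≤ 1 + ‖γ‖ := by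
    intro θ γ
    calc ‖Complex.exp (↑θ * Complex.I) - γ‖
        ≤ ‖Complex.exp (↑θ * Complex.I)‖ + ‖γ‖ := by
          exact norm_sub_le _ _
      _ = 1 + ‖γ‖ := by rw [Complex.norm_exp_ofReal_mul_I]
  have habs_ge : ∀ (θ : ℝ) (γ : ℂ),
      ‖γ‖ - 1 ≤ ‖Complex.exp (↑θ * Complex.I) - γ‖ := by
    intro θ γ
    have h := norm_sub_norm_le γ (Complex.exp (↑θ * Complex.I))
    rw [norm_sub_rev] at h
    rw [Complex.norm_exp_ofReal_mul_I] at h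
    linarith
  -- the key lower bound for the main integral
  have hlow : ∀ (α β : ℂ) (D : ℝ), 0 < D →
      (∀ θ : ℝ, ‖Complex.exp (↑θ * Complex.I) - β‖ ≤ D) →
      ENNReal.ofReal (r^s / D^s) * (1/2) ≤ ∫⁻ θ, ENNReal.ofReal
          (‖Complex.exp (↑θ * Complex.I) - α‖ ^ s /
            ‖Complex.exp (↑θ * Complex.I) - β‖ ^ s) ∂ν := by
    intro α β D hD hDle
    set A := {θ : ℝ | r ≤ ‖Complex.exp (↑θ * Complex.I) - α‖} with hAdef
    have hAm : MeasurableSet A :=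
      (isClosed_le continuous_const (aux_cont_abs α)).measurableSet
    have hbound : ∀ᵐ (θ : ℝ) ∂ν, θ ∈ A → ENNReal.ofReal (r^s / D^s) ≤ ENNReal.ofReal
        (‖Complex.exp (↑θ * Complex.I) - α‖ ^ s /
          ‖Complex.exp (↑θ * Complex.I) - β‖ ^ s) := by
      filter_upwards [measure_eq_zero_iff_ae_notMem.mp (hnull β)] with θ hθβ hθA
      apply ENNReal.ofReal_le_ofReal
      have hd0 : 0 < ‖Complex.exp (↑θ * Complex.I) - β‖ :=
        norm_pos_iff.mpr (sub_ne_zero.mpr hθβ)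
      have hfs : r^s ≤ ‖Complex.exp (↑θ * Complex.I) - α‖ ^ s :=
        Real.rpow_le_rpow hrpos.le hθA hs0.le
      have hds : ‖Complex.exp (↑θ * Complex.I) - β‖ ^ s ≤ D^s :=
        Real.rpow_le_rpow (norm_nonneg _) (hDle θ) hs0.le
      have hds0 : 0 < ‖Complex.exp (↑θ * Complex.I) - β‖ ^ s :=
        Real.rpow_pos_of_pos hd0 s
      exact div_le_div₀ ((Real.rpow_nonneg hrpos.le s).trans hfs) hfs hds0 hds
    calc ENNReal.ofReal (r^s / D^s) * (1/2)
        ≤ ENNReal.ofReal (r^s / D^s) * ν A := mul_le_mul_right (hA α) _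
      _ = ∫⁻ _ in A, ENNReal.ofReal (r^s / D^s) ∂ν := (setLIntegral_const A _).symm
      _ ≤ ∫⁻ θ in A, ENNReal.ofReal
            (‖Complex.exp (↑θ * Complex.I) - α‖ ^ s /
              ‖Complex.exp (↑θ * Complex.I) - β‖ ^ s) ∂ν :=
          setLIntegral_mono_ae' hAm hbound
      _ ≤ _ := setLIntegral_le_lintegral _ _
  have hhalf : ∀ x : ℝ, ENNReal.ofReal (x/2) = ENNReal.ofReal x * (1/2) := by
    intro x
    rw [ENNReal.ofReal_div_of_pos (by norm_num : (0:ℝ) < 2), one_div, div_eq_mul_inv]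
    congr 1
    simp
  -- the constant
  refine ⟨min (r^s * (4:ℝ)^(-s) / (2*C)) (r^s * (2:ℝ)^(-s) / 2), ?_, ?_⟩
  · have h1 : (0:ℝ) < r^s := Real.rpow_pos_of_pos hrpos s
    have h2 : (0:ℝ) < (4:ℝ)^(-s) := Real.rpow_pos_of_pos (by norm_num) _
    have h3 : (0:ℝ) < (2:ℝ)^(-s) := Real.rpow_pos_of_pos (by norm_num) _
    exact lt_min (by positivity) (by positivity)
  intro α β
  by_cases hβ : ‖β‖ ≤ 3
  · -- |β| ≤ 3
    have hD : ∀ θ : ℝ, ‖Complex.exp (↑θ * Complex.I) - β‖ ≤ 4 := fun θ =>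
      (habs_le θ β).trans (by linarith)
    calc ENNReal.ofReal (min (r^s * (4:ℝ)^(-s) / (2*C)) (r^s * (2:ℝ)^(-s) / 2)) *
          (∫⁻ θ, ENNReal.ofReal (1 / ‖Complex.exp (↑θ * Complex.I) - β‖ ^ s) ∂ν)
        ≤ ENNReal.ofReal (r^s * (4:ℝ)^(-s) / (2*C)) *
          (∫⁻ θ, ENNReal.ofReal (1 / ‖Complex.exp (↑θ * Complex.I) - β‖ ^ s) ∂ν) :=
          mul_le_mul_left (ENNReal.ofReal_le_ofReal (min_le_left _ _)) _
      _ ≤ ENNReal.ofReal (r^s * (4:ℝ)^(-s) / (2*C)) * ENNReal.ofReal C :=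
          mul_le_mul_right (hKC β) _
      _ = ENNReal.ofReal (r^s * (4:ℝ)^(-s) / (2*C) * C) := by
          rw [ENNReal.ofReal_mul (by positivity)]
      _ = ENNReal.ofReal (r^s / 4^s / 2) := by
          congr 1
          rw [Real.rpow_neg (by norm_num : (0:ℝ) ≤ 4)]
          field_simp
      _ = ENNReal.ofReal (r^s / 4^s) * (1/2) := hhalf _
      _ ≤ _ := hlow α β 4 (by norm_num) hD
  · -- |β| > 3
    push_neg at hβ
    set b := ‖β‖ with hbdef
    have hb1 : (0:ℝ) < b - 1 := by linarith
    have hgup : (∫⁻ θ, ENNReal.ofReal (1 / ‖Complex.exp (↑θ * Complex.I) - β‖ ^ s) ∂ν)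
        ≤ ENNReal.ofReal ((b-1)^(-s)) := by
      have hpt : ∀ θ : ℝ, ENNReal.ofReal (1 / ‖Complex.exp (↑θ * Complex.I) - β‖ ^ s)
          ≤ ENNReal.ofReal ((b-1)^(-s)) := by
        intro θ
        apply ENNReal.ofReal_le_ofReal
        have hd : b - 1 ≤ ‖Complex.exp (↑θ * Complex.I) - β‖ := habs_ge θ β
        have h1 : (b-1)^s ≤ ‖Complex.exp (↑θ * Complex.I) - β‖ ^ s :=
          Real.rpow_le_rpow hb1.le hd hs0.le
        have h2 : 0 < (b-1)^s := Real.rpow_pos_of_pos hb1 s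
        rw [Real.rpow_neg hb1.le, ← one_div]
        exact one_div_le_one_div_of_le h2 h1
      calc (∫⁻ θ, ENNReal.ofReal (1 / ‖Complex.exp (↑θ * Complex.I) - β‖ ^ s) ∂ν)
          ≤ ∫⁻ _, ENNReal.ofReal ((b-1)^(-s)) ∂ν := lintegral_mono hpt
        _ = ENNReal.ofReal ((b-1)^(-s)) := by rw [lintegral_const, measure_univ, mul_one]
    have key : (2:ℝ)^(-s) * (b-1)^(-s) ≤ (1+b)^(-s) := by
      rw [← Real.mul_rpow (by norm_num : (0:ℝ) ≤ 2) hb1.le]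
      rw [Real.rpow_neg (by linarith : (0:ℝ) ≤ 2*(b-1)), Real.rpow_neg (by linarith : (0:ℝ) ≤ 1+b)]
      exact inv_anti₀ (Real.rpow_pos_of_pos (by linarith) s)
        (Real.rpow_le_rpow (by linarith) (by linarith) hs0.le)
    have hreal : r^s * (2:ℝ)^(-s) / 2 * (b-1)^(-s) ≤ r^s / (1+b)^s / 2 := by
      have h1 : r^s * (2:ℝ)^(-s) / 2 * (b-1)^(-s) = (r^s/2) * ((2:ℝ)^(-s) * (b-1)^(-s)) := by ring
      have h2 : (0:ℝ) ≤ r^s/2 := by positivity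
      have h3 := mul_le_mul_of_nonneg_left key h2
      rw [h1]
      refine h3.trans (le_of_eq ?_)
      rw [Real.rpow_neg (by linarith : (0:ℝ) ≤ 1+b)]
      ring
    calc ENNReal.ofReal (min (r^s * (4:ℝ)^(-s) / (2*C)) (r^s * (2:ℝ)^(-s) / 2)) *
          (∫⁻ θ, ENNReal.ofReal (1 / ‖Complex.exp (↑θ * Complex.I) - β‖ ^ s) ∂ν)
        ≤ ENNReal.ofReal (r^s * (2:ℝ)^(-s) / 2) * ENNReal.ofReal ((b-1)^(-s)) :=
          mul_le_mul' (ENNReal.ofReal_le_ofReal (min_le_right _ _)) hgup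
      _ = ENNReal.ofReal (r^s * (2:ℝ)^(-s) / 2 * (b-1)^(-s)) := by
          rw [ENNReal.ofReal_mul (by positivity)]
      _ ≤ ENNReal.ofReal (r^s / (1+b)^s / 2) := ENNReal.ofReal_le_ofReal hreal
      _ = ENNReal.ofReal (r^s / (1+b)^s) * (1/2) := hhalf _
      _ ≤ _ := hlow α β (1+b) (by linarith) (fun θ => habs_le θ β)
end

section
/- Maximum principle for sub-invariant sequences: let σ : ℤ^d × ℤ^d → [0,∞) be a kernel with σ(k,k) = 0 and N := sup_k ∑_{l} σ(k,l) < ∞. Let C > N and let φ ∈ ℓ^∞(ℤ^d) be real-valued with φ(j) ≤ 0 for a fixed j and C·φ(k) ≤ ∑_l σ(k,l) φ(l) for all k ≠ j. Then φ(k) ≤ 0 for all k ∈ ℤ^d. -/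
/-- Maximum principle for sub-invariant bounded sequences on `ℤ^d`. -/
theorem max_principle_subinvariant (d : ℕ)
    (σ : (Fin d → ℤ) → (Fin d → ℤ) → ℝ)
    (hσ0 : ∀ k l, 0 ≤ σ k l) (hσdiag : ∀ k, σ k k = 0)
    (hσsum : ∀ k, Summable (σ k))
    (N : ℝ) (hN : ∀ k, ∑' l, σ k l ≤ N)
    (C : ℝ) (hNC : N < C)
    (φ : (Fin d → ℤ) → ℝ) (M : ℝ) (hφbdd : ∀ k, |φ k| ≤ M)
    (j : Fin d → ℤ) (hφj : φ j ≤ 0)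
    (hsub : ∀ k, k ≠ j → C * φ k ≤ ∑' l, σ k l * φ l) :
    ∀ k, φ k ≤ 0 := by
  have hN0 : 0 ≤ N := le_trans (tsum_nonneg (hσ0 j)) (hN j)
  have hC : 0 < C := lt_of_le_of_lt hN0 hNC
  set s := ⨆ k, φ k with hs
  have hbdd : BddAbove (Set.range φ) := ⟨M, by rintro _ ⟨k, rfl⟩; exact (abs_le.mp (hφbdd k)).2⟩
  have hle : ∀ k, φ k ≤ s := fun k => le_ciSup hbdd k
  by_cases hs0 : s ≤ 0
  · intro k; exact (hle k).trans hs0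
  push_neg at hs0
  exfalso
  have key : ∀ k, φ k ≤ s * N / C := by
    intro k
    by_cases hk : k = j
    · subst hk; exact hφj.trans (by positivity)
    · have h1 : C * φ k ≤ ∑' l, σ k l * φ l := hsub k hk
      have hsum1 : Summable (fun l => σ k l * φ l) := by
        apply Summable.of_abs
        apply Summable.of_nonneg_of_le (fun l => abs_nonneg _) (fun l => ?_) ((hσsum k).mul_right M)
        rw [abs_mul, abs_of_nonneg (hσ0 k l)]
        exact mul_le_mul_of_nonneg_left (hφbdd l) (hσ0 k l)
      have h2 : (∑' l, σ k l * φ l) ≤ ∑' l, σ k l * s := by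
        apply Summable.tsum_le_tsum (fun l => mul_le_mul_of_nonneg_left (hle l) (hσ0 k l)) hsum1
        exact (hσsum k).mul_right s
      have h3 : (∑' l, σ k l * s) = (∑' l, σ k l) * s := tsum_mul_right
      have h4 : (∑' l, σ k l) * s ≤ N * s :=
        mul_le_mul_of_nonneg_right (hN k) hs0.le
      have h5 : C * φ k ≤ N * s := h1.trans (h2.trans (h3 ▸ h4))
      rw [le_div_iff₀ hC]
      nlinarith
  have hss : s ≤ s * N / C := ciSup_le key
  rw [le_div_iff₀ hC] at hss
  nlinarith
end

section
/- Exponential decay lemma: let σ : ℤ^d × ℤ^d → [0,∞) with σ(k,k) = 0 and N := sup_k ∑_l σ(k,l) < ∞. Let f ∈ ℓ^∞(ℤ^d) be nonnegative, fix j ∈ ℤ^d, and assume there is C > N with ∑_l σ(k,l) f(l) ≥ C f(k) for all k ≠ j. If γ > 0 satisfies sup_k ∑_l σ(k,l) e^{γ|k-l|} < C, then f(k) ≤ f(j) e^{-γ|j-k|} for all k ∈ ℤ^d. -/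
/-- Exponential decay lemma (Aizenman–Graf style): `‖·‖` on `Fin d → ℤ` is the
sup norm. -/
theorem exponential_decay_lemma (d : ℕ)
    (σ : (Fin d → ℤ) → (Fin d → ℤ) → ℝ)
    (hσ0 : ∀ k l, 0 ≤ σ k l) (hσdiag : ∀ k, σ k k = 0)
    (hσsum : ∀ k, Summable (σ k))
    (N : ℝ) (hN : ∀ k, ∑' l, σ k l ≤ N)
    (C : ℝ) (hNC : N < C)
    (f : (Fin d → ℤ) → ℝ) (hf0 : ∀ k, 0 ≤ f k)
    (M : ℝ) (hfbdd : ∀ k, f k ≤ M)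
    (j : Fin d → ℤ)
    (hsub : ∀ k, k ≠ j → C * f k ≤ ∑' l, σ k l * f l)
    (γ : ℝ) (hγ : 0 < γ)
    (hexp : ∀ k, Summable (fun l => σ k l * Real.exp (γ * ‖k - l‖)))
    (hexpC : ∀ k, ∑' l, σ k l * Real.exp (γ * ‖k - l‖) < C) :
    ∀ k, f k ≤ f j * Real.exp (-γ * ‖j - k‖) := by
  have hu0 : ∀ k : Fin d → ℤ, 0 ≤ f j * Real.exp (-γ * ‖j - k‖) :=
    fun k => mul_nonneg (hf0 j) (Real.exp_pos _).le
  have hne : (Set.range fun k : Fin d → ℤ => f k - f j * Real.exp (-γ * ‖j - k‖)).Nonempty :=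
    Set.range_nonempty _
  have hg_bdd : BddAbove (Set.range fun k : Fin d → ℤ =>
      f k - f j * Real.exp (-γ * ‖j - k‖)) := by
    refine ⟨M, ?_⟩
    rintro x ⟨k, rfl⟩
    have h1 := hu0 k
    have h2 := hfbdd k
    simp only
    linarith
  set S := sSup (Set.range fun k : Fin d → ℤ => f k - f j * Real.exp (-γ * ‖j - k‖)) with hS
  have hle : ∀ k, f k - f j * Real.exp (-γ * ‖j - k‖) ≤ S :=
    fun k => le_csSup hg_bdd ⟨k, rfl⟩
  have hN0 : 0 ≤ N := le_trans (tsum_nonneg (hσ0 j)) (hN j)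
  have hC0 : 0 < C := lt_of_le_of_lt hN0 hNC
  by_contra hcon
  push_neg at hcon
  obtain ⟨k0, hk0⟩ := hcon
  have hSpos : 0 < S := lt_of_lt_of_le (by linarith [hle k0]) (hle k0)
  set ε := S * (C - N) / (2 * C) with hε
  have hε0 : 0 < ε := by
    apply div_pos
    · nlinarith
    · linarith
  have hεS : ε < S := by
    rw [hε, div_lt_iff₀ (by linarith : (0:ℝ) < 2 * C)]
    nlinarith
  have hCε : C * ε = S * (C - N) / 2 := by
    rw [hε]; field_simp
  obtain ⟨x, hxmem, hx⟩ := exists_lt_of_lt_csSup hne (show S - ε < S by linarith)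
  obtain ⟨k, rfl⟩ := hxmem
  have hkj : k ≠ j := by
    rintro rfl
    simp only [sub_self, norm_zero, mul_zero, Real.exp_zero, mul_one] at hx
    linarith
  have hM0 : 0 ≤ M := le_trans (hf0 j) (hfbdd j)
  -- summability facts
  have hsum_f : Summable (fun l => σ k l * f l) := by
    refine Summable.of_nonneg_of_le (fun l => mul_nonneg (hσ0 k l) (hf0 l))
      (fun l => mul_le_mul_of_nonneg_left (hfbdd l) (hσ0 k l)) ((hσsum k).mul_right M)
  have hu_le : ∀ l : Fin d → ℤ, f j * Real.exp (-γ * ‖j - l‖) ≤ f j := by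
    intro l
    have h1 : Real.exp (-γ * ‖j - l‖) ≤ 1 := by
      rw [Real.exp_le_one_iff]
      have := norm_nonneg (j - l)
      nlinarith
    nlinarith [hf0 j, Real.exp_pos (-γ * ‖j - l‖)]
  have hsum_u : Summable (fun l => σ k l * (f j * Real.exp (-γ * ‖j - l‖))) := by
    refine Summable.of_nonneg_of_le
      (fun l => mul_nonneg (hσ0 k l) (hu0 l))
      (fun l => mul_le_mul_of_nonneg_left (hu_le l) (hσ0 k l)) ((hσsum k).mul_right (f j))
  have hsum_S : Summable (fun l => σ k l * S) := (hσsum k).mul_right S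
  -- step 1
  have step1 : C * f k ≤ ∑' l, σ k l * f l := hsub k hkj
  -- step 2
  have point : ∀ l, σ k l * f l ≤ σ k l * (f j * Real.exp (-γ * ‖j - l‖)) + σ k l * S := by
    intro l
    have h1 : f l ≤ f j * Real.exp (-γ * ‖j - l‖) + S := by linarith [hle l]
    have h2 := mul_le_mul_of_nonneg_left h1 (hσ0 k l)
    nlinarith
  have step2 : ∑' l, σ k l * f l ≤
      (∑' l, σ k l * (f j * Real.exp (-γ * ‖j - l‖))) + ∑' l, σ k l * S := by
    rw [← Summable.tsum_add hsum_u hsum_S]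
    exact Summable.tsum_le_tsum point hsum_f (hsum_u.add hsum_S)
  -- step 3
  have pt3 : ∀ l, σ k l * (f j * Real.exp (-γ * ‖j - l‖)) ≤
      (f j * Real.exp (-γ * ‖j - k‖)) * (σ k l * Real.exp (γ * ‖k - l‖)) := by
    intro l
    have htri : ‖j - k‖ ≤ ‖j - l‖ + ‖k - l‖ := by
      have h := norm_add_le (j - l) (l - k)
      rw [sub_add_sub_cancel] at h
      rw [norm_sub_rev l k] at h
      exact h
    have hexp_le : Real.exp (-γ * ‖j - l‖) ≤
        Real.exp (-γ * ‖j - k‖) * Real.exp (γ * ‖k - l‖) := by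
      rw [← Real.exp_add]
      apply Real.exp_le_exp.2
      nlinarith [hγ.le]
    have h := mul_le_mul_of_nonneg_left hexp_le (mul_nonneg (hσ0 k l) (hf0 j))
    nlinarith [h]
  have step3 : ∑' l, σ k l * (f j * Real.exp (-γ * ‖j - l‖)) ≤
      (f j * Real.exp (-γ * ‖j - k‖)) * C := by
    calc ∑' l, σ k l * (f j * Real.exp (-γ * ‖j - l‖))
        ≤ ∑' l, (f j * Real.exp (-γ * ‖j - k‖)) * (σ k l * Real.exp (γ * ‖k - l‖)) :=
          Summable.tsum_le_tsum pt3 hsum_u ((hexp k).mul_left _)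
      _ = (f j * Real.exp (-γ * ‖j - k‖)) * ∑' l, σ k l * Real.exp (γ * ‖k - l‖) :=
          tsum_mul_left
      _ ≤ (f j * Real.exp (-γ * ‖j - k‖)) * C :=
          mul_le_mul_of_nonneg_left (hexpC k).le (hu0 k)
  -- step 4
  have step4 : ∑' l, σ k l * S ≤ N * S := by
    rw [tsum_mul_right]
    exact mul_le_mul_of_nonneg_right (hN k) hSpos.le
  -- combine
  have hfin : C * f k ≤ (f j * Real.exp (-γ * ‖j - k‖)) * C + N * S := by linarith
  have hgk : S - ε < f k - f j * Real.exp (-γ * ‖j - k‖) := hx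
  have : C * (S - ε) < N * S := by nlinarith [hu0 k]
  nlinarith
end

section
/- Diagonal fractional moment bound: let Û be unitary independent of θ, j a unit vector, and U_θ = e^{-iθ|j⟩⟨j|} Û (i.e. the phase at site j is θ). Suppose θ is distributed with bounded density τ on [0,2π). Then for 0 < s < 1, E_θ( |⟨j| U_θ(U_θ - z)^{-1} j⟩|^s ) ≤ C(s, ‖τ‖_∞) uniformly in z ∈ ℂ \ S^1, where C is the constant from the uniform bound ∫ |e^{iθ} - β|^{-s} dν(θ) ≤ C. -/
open MeasureTheory Real Complex
open scoped ENNReal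

section aux
variable {H : Type*} [NormedAddCommGroup H] [InnerProductSpace ℂ H] [CompleteSpace H]

lemma aux_isUnit (W : H →L[ℂ] H) (hW : W ∈ unitary (H →L[ℂ] H)) (z : ℂ)
    (hz : ‖z‖ ≠ 1) : IsUnit (W - z • (1 : H →L[ℂ] H)) := by
  have hsp : z ∉ spectrum ℂ W := by
    intro h
    have h2 := spectrum.subset_circle_of_unitary hW h
    rw [mem_sphere_zero_iff_norm] at h2
    exact hz (by simpa using h2)
  rw [spectrum.notMem_iff] at hsp
  have h3 : W - z • (1 : H →L[ℂ] H) = -(algebraMap ℂ (H →L[ℂ] H) z - W) := by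
    simp [Algebra.algebraMap_eq_smul_one]
  rw [h3]
  exact hsp.neg
end aux

open MeasureTheory Real Complex
open scoped ENNReal

section aux
variable {H : Type*} [NormedAddCommGroup H] [InnerProductSpace ℂ H] [CompleteSpace H]

lemma aux_V_unitary (j : H) (hj : ‖j‖ = 1) (P : H →L[ℂ] H)
    (hP : P = (innerSL ℂ j).smulRight j) (θ : ℝ) :
    (1 + (Complex.exp (-(θ:ℂ) * Complex.I) - 1) • P) ∈ unitary (H →L[ℂ] H) := by
  set c : ℂ := Complex.exp (-(θ:ℂ) * Complex.I) - 1 with hc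
  have hjj : (inner ℂ j j : ℂ) = 1 := by
    rw [inner_self_eq_norm_sq_to_K, hj]; norm_num
  have hPapp : ∀ x : H, P x = (inner ℂ j x : ℂ) • j := by
    intro x; rw [hP]; rfl
  have hPP : P * P = P := by
    ext x
    simp only [ContinuousLinearMap.mul_apply, hPapp, inner_smul_right, hjj, mul_one]
  have hPstar : star P = P := by
    rw [ContinuousLinearMap.star_eq_adjoint]
    symm
    rw [ContinuousLinearMap.eq_adjoint_iff]
    intro x y
    simp only [hPapp, inner_smul_left, inner_smul_right]
    rw [← inner_conj_symm j x, Complex.conj_conj]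
    ring
  set d : ℂ := (starRingEnd ℂ) c with hd
  have hcoef : c + d + d * c = 0 := by
    have h1 : (starRingEnd ℂ) (Complex.exp (-(θ:ℂ) * Complex.I)) =
        Complex.exp ((θ:ℂ) * Complex.I) := by
      rw [← Complex.exp_conj]
      congr 1
      simp [map_mul, Complex.conj_I]
    have h2 : Complex.exp ((θ:ℂ) * Complex.I) * Complex.exp (-(θ:ℂ) * Complex.I) = 1 := by
      rw [← Complex.exp_add]; ring_nf; exact Complex.exp_zero
    rw [hd, hc]
    simp only [map_sub, map_one, h1]
    linear_combination h2
  have key : star (1 + c • P) * (1 + c • P) = 1 := by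
    rw [star_add, star_one, star_smul, hPstar, RCLike.star_def, ← hd]
    rw [add_mul, mul_add, mul_add, smul_mul_smul_comm, hPP]
    simp only [one_mul, mul_one]
    calc _ = 1 + (c + d + d * c) • P := by module
    _ = 1 := by rw [hcoef, zero_smul, add_zero]
  have keys : (1 + c • P) * star (1 + c • P) = 1 := by
    rw [star_add, star_one, star_smul, hPstar, RCLike.star_def, ← hd]
    rw [add_mul, mul_add, mul_add, smul_mul_smul_comm, hPP]
    simp only [one_mul, mul_one]
    calc _ = 1 + (c + d + d * c) • P := by module
    _ = 1 := by rw [hcoef, zero_smul, add_zero]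
  exact ⟨key, keys⟩

end aux
/-- Diagonal fractional moment bound: averaging the random phase at site `j`
with a bounded density yields a bound on `E(|⟨j|U_θ(U_θ-z)⁻¹ j⟩|^s)`, uniform in
`z ∉ S¹`, with the same constant `C` bounding `∫ |e^{iθ}-β|^{-s} dν(θ)`. -/
theorem diagonal_fractional_moment_bound
    {H : Type*} [NormedAddCommGroup H] [InnerProductSpace ℂ H] [CompleteSpace H]
    (s : ℝ) (hs0 : 0 < s) (hs1 : s < 1)
    (τ : ℝ → ℝ≥0∞) (M : ℝ≥0∞) (hM : M < ⊤) (hτ : ∀ θ, τ θ ≤ M)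
    (ν : Measure ℝ)
    (hν : ν = (volume.restrict (Set.Ico (0:ℝ) (2 * π))).withDensity τ)
    (hprob : IsProbabilityMeasure ν)
    (C : ℝ≥0∞)
    (hC : ∀ β : ℂ,
      ∫⁻ θ, ENNReal.ofReal (1 / ‖Complex.exp (θ * Complex.I) - β‖ ^ s) ∂ν ≤ C)
    (j : H) (hj : ‖j‖ = 1)
    (P : H →L[ℂ] H) (hP : P = (innerSL ℂ j).smulRight j)
    (Uhat : H →L[ℂ] H) (hUhat : Uhat ∈ unitary (H →L[ℂ] H))
    (U : ℝ → H →L[ℂ] H)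
    (hU : ∀ θ : ℝ, U θ = Uhat + (Complex.exp (-(θ:ℂ) * Complex.I) - 1) • (P ∘L Uhat))
    (z : ℂ) (hz : ‖z‖ ≠ 1) :
    ∫⁻ θ, ENNReal.ofReal
        (‖(inner ℂ j ((U θ ∘L Ring.inverse (U θ - z • (1 : H →L[ℂ] H))) j) : ℂ)‖ ^ s) ∂ν
      ≤ C := by
  have hjj : (inner ℂ j j : ℂ) = 1 := by rw [inner_self_eq_norm_sq_to_K, hj]; norm_num
  have hPapp : ∀ x : H, P x = (inner ℂ j x : ℂ) • j := by intro x; rw [hP]; rfl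
  have hUunit : ∀ θ : ℝ, U θ ∈ unitary (H →L[ℂ] H) := by
    intro θ
    have h1 : U θ = (1 + (Complex.exp (-(θ:ℂ) * Complex.I) - 1) • P) * Uhat := by
      rw [hU θ, add_mul, one_mul, smul_mul_assoc]; rfl
    rw [h1]
    exact mul_mem (aux_V_unitary j hj P hP θ) hUhat
  have hA : IsUnit (Uhat - z • (1 : H →L[ℂ] H)) := aux_isUnit Uhat hUhat z hz
  set R : H →L[ℂ] H := Ring.inverse (Uhat - z • (1 : H →L[ℂ] H)) with hR
  clear_value R
  set G : ℂ := (inner ℂ j (Uhat (R j)) : ℂ) with hG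
  clear_value G
  have main : ∀ θ : ℝ, ∃ a : ℂ,
      (inner ℂ j ((U θ ∘L Ring.inverse (U θ - z • (1 : H →L[ℂ] H))) j) : ℂ)
        = Complex.exp (-(θ:ℂ) * Complex.I) * a
      ∧ a * (1 + (Complex.exp (-(θ:ℂ) * Complex.I) - 1) * G) = G := by
    intro θ
    set c : ℂ := Complex.exp (-(θ:ℂ) * Complex.I) - 1 with hc
    have hAθ : IsUnit (U θ - z • (1 : H →L[ℂ] H)) := aux_isUnit _ (hUunit θ) z hz
    set x : H := Ring.inverse (U θ - z • (1 : H →L[ℂ] H)) j with hx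
    clear_value x
    set a : ℂ := (inner ℂ j (Uhat x) : ℂ) with ha
    clear_value a
    have hPU : (P ∘L Uhat) x = a • j := by
      rw [ContinuousLinearMap.comp_apply, hPapp, ha]
    have hxeq : (U θ - z • (1 : H →L[ℂ] H)) x = j := by
      rw [hx, ← ContinuousLinearMap.mul_apply, Ring.mul_inverse_cancel _ hAθ,
        ContinuousLinearMap.one_apply]
    have hAx : (Uhat - z • (1 : H →L[ℂ] H)) x = (1 - c * a) • j := by
      have h2 : (U θ - z • (1 : H →L[ℂ] H)) x
          = (Uhat - z • (1 : H →L[ℂ] H)) x + (c * a) • j := by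
        rw [hU θ, ContinuousLinearMap.sub_apply, ContinuousLinearMap.sub_apply,
          ContinuousLinearMap.add_apply, ContinuousLinearMap.smul_apply, hPU, smul_smul]
        abel
      rw [h2] at hxeq
      have h3 : (Uhat - z • (1 : H →L[ℂ] H)) x = j - (c * a) • j := by
        rw [eq_sub_iff_add_eq]; exact hxeq
      rw [h3, sub_smul, one_smul]
    have hxval : x = (1 - c * a) • R j := by
      have h3 : (R * (Uhat - z • (1 : H →L[ℂ] H))) x = R ((1 - c * a) • j) := by
        rw [ContinuousLinearMap.mul_apply, hAx]
      rw [hR, Ring.inverse_mul_cancel _ hA, ContinuousLinearMap.one_apply, _root_.map_smul,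
        ← hR] at h3
      exact h3
    have hkey : a = (1 - c * a) * G := by
      rw [hxval] at ha
      rw [_root_.map_smul, inner_smul_right, ← hG] at ha
      exact ha
    refine ⟨a, ?_, by linear_combination hkey⟩
    have h4 : (U θ ∘L Ring.inverse (U θ - z • (1 : H →L[ℂ] H))) j = U θ x := by
      rw [hx]; rfl
    have h5 : U θ x = Uhat x + (c * a) • j := by
      rw [hU θ, ContinuousLinearMap.add_apply, ContinuousLinearMap.smul_apply, hPU, smul_smul]
    rw [h4, h5, inner_add_right, inner_smul_right, hjj, mul_one, ← ha, hc]
    ring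
  by_cases hGz : G = 0
  · have hzero : ∀ θ : ℝ, ENNReal.ofReal
        (‖(inner ℂ j ((U θ ∘L Ring.inverse (U θ - z • (1 : H →L[ℂ] H))) j) : ℂ)‖ ^ s)
        = 0 := by
      intro θ
      obtain ⟨a, h1, h2⟩ := main θ
      have ha0 : a = 0 := by
        rw [hGz, mul_zero, add_zero, mul_one] at h2; exact h2
      rw [h1, ha0, mul_zero, norm_zero, Real.zero_rpow hs0.ne', ENNReal.ofReal_zero]
    rw [lintegral_congr hzero, lintegral_zero]
    exact zero_le
  · set β : ℂ := (starRingEnd ℂ) (1 - G⁻¹) with hβ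
    have hpt : ∀ θ : ℝ, ENNReal.ofReal
        (‖(inner ℂ j ((U θ ∘L Ring.inverse (U θ - z • (1 : H →L[ℂ] H))) j) : ℂ)‖ ^ s)
        = ENNReal.ofReal (1 / ‖Complex.exp ((θ:ℂ) * Complex.I) - β‖ ^ s) := by
      intro θ
      obtain ⟨a, h1, h2⟩ := main θ
      set c : ℂ := Complex.exp (-(θ:ℂ) * Complex.I) - 1 with hc
      have hden : (1 + c * G) ≠ 0 := by
        intro h0
        exact hGz (by rw [← h2, h0, mul_zero])
      have hconj : Complex.exp ((θ:ℂ) * Complex.I) - β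
          = (starRingEnd ℂ) (Complex.exp (-(θ:ℂ) * Complex.I) - (1 - G⁻¹)) := by
        have hce : (starRingEnd ℂ) (Complex.exp (-(θ:ℂ) * Complex.I))
            = Complex.exp ((θ:ℂ) * Complex.I) := by
          rw [← Complex.exp_conj]
          congr 1
          simp [Complex.conj_I]
        rw [map_sub, hce, ← hβ]
      have hval : Complex.exp (-(θ:ℂ) * Complex.I) - (1 - G⁻¹) = (1 + c * G) / G := by
        rw [hc]; field_simp; ring
      have habs2 : ‖Complex.exp ((θ:ℂ) * Complex.I) - β‖
          = ‖1 + c * G‖ / ‖G‖ := by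
        rw [hconj, Complex.norm_conj, hval, norm_div]
      have habsa : ‖a‖ = ‖G‖ / ‖1 + c * G‖ := by
        have : a = G / (1 + c * G) := by
          rw [eq_div_iff hden]
          linear_combination h2
        rw [this, norm_div]
      have hGabs : ‖G‖ ≠ 0 := by simpa using hGz
      have hcGabs : ‖1 + c * G‖ ≠ 0 := by simpa using hden
      have hinv : ‖a‖ = (‖Complex.exp ((θ:ℂ) * Complex.I) - β‖)⁻¹ := by
        rw [habsa, habs2]
        field_simp
      have htgt : ‖(inner ℂ j ((U θ ∘L Ring.inverse (U θ - z • (1 : H →L[ℂ] H))) j) : ℂ)‖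
          = ‖a‖ := by
        rw [h1, norm_mul, Complex.norm_exp]
        simp
      rw [htgt, hinv, Real.inv_rpow (norm_nonneg _), one_div]
    calc (∫⁻ θ, ENNReal.ofReal
        (‖(inner ℂ j ((U θ ∘L Ring.inverse (U θ - z • (1 : H →L[ℂ] H))) j) : ℂ)‖ ^ s) ∂ν)
        = ∫⁻ θ, ENNReal.ofReal
            (1 / ‖Complex.exp ((θ:ℂ) * Complex.I) - β‖ ^ s) ∂ν :=
          lintegral_congr hpt
      _ ≤ C := hC β
end
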